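/- Suppose the sequences a₁, …, a_ℓ : ℕ → ℤ are controlled by the invariant factor for every system. Then for every system (X, 𝒳, μ, T₁, …, T_ℓ) and every E ∈ 𝒳: (1) the limit lim_{N→∞} 𝔼_{n∈[N]} μ(E ∩ T₁^{−a₁(n)}E ∩ ⋯ ∩ T_ℓ^{−a_ℓ(n)}E) exists and is at least μ(E)^{ℓ+1}; and (2) for every ε > 0 the set {n ∈ ℕ : μ(E ∩ T₁^{−a₁(n)}E ∩ ⋯ ∩ T_ℓ^{−a_ℓ(n)}E) ≥ μ(E)^{ℓ+1} − ε} has positive upper density. -/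

import Mathlib

open MeasureTheory Filter ENNReal Topology

/-- The group of measurable self-equivalences of `X`, with multiplication given by
composition of maps: `⇑(g * h) = ⇑g ∘ ⇑h`. -/
instance measurableEquivGroup {X : Type*} [MeasurableSpace X] : Group (X ≃ᵐ X) where
  mul g h := h.trans g
  one := MeasurableEquiv.refl X
  inv := MeasurableEquiv.symm
  mul_assoc _ _ _ := MeasurableEquiv.ext rfl
  one_mul _ := MeasurableEquiv.ext rfl
  mul_one _ := MeasurableEquiv.ext rfl
  inv_mul_cancel g := MeasurableEquiv.ext (funext fun x => g.symm_apply_apply x)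

/-- The σ-algebra `I(T)` of `T`-invariant measurable sets. -/
def invariantAlgebra {X : Type*} (m : MeasurableSpace X) (T : X → X) : MeasurableSpace X where
  MeasurableSet' s := m.MeasurableSet' s ∧ T ⁻¹' s = s
  measurableSet_empty := ⟨m.measurableSet_empty, Set.preimage_empty⟩
  measurableSet_compl s hs := ⟨m.measurableSet_compl s hs.1, by rw [Set.preimage_compl, hs.2]⟩
  measurableSet_iUnion f hf := ⟨m.measurableSet_iUnion f fun i => (hf i).1, by
    rw [Set.preimage_iUnion]; exact Set.iUnion_congr fun i => (hf i).2⟩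

/-- Upper density of a set of positive integers. -/
noncomputable def upperDensityNat (B : Set ℕ) : ℝ :=
  Filter.limsup (fun N : ℕ => (Nat.card {n : ℕ // n ∈ B ∧ 1 ≤ n ∧ n ≤ N} : ℝ) / (N : ℝ))
    Filter.atTop

/-- The sequences `a 1, …, a l` are controlled by the invariant factor for the system given by
the commuting measure-preserving transformations `T 1, …, T l`: the multiple ergodic averages
converge in `L²(μ)` to the product of the conditional expectations on the invariant factors. -/
def InvariantFactorControlled {X : Type*} [m : MeasurableSpace X] (μ : Measure X) {l : ℕ}
    (T : Fin l → X ≃ᵐ X) (a : Fin l → ℕ → ℤ) : Prop :=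
  ∀ f : Fin l → X → ℝ, (∀ j, Measurable (f j)) → (∀ j, ∃ C, ∀ x, |f j x| ≤ C) →
    Tendsto (fun N : ℕ => eLpNorm (fun x =>
        (N : ℝ)⁻¹ * ∑ n ∈ Finset.Icc 1 N, ∏ j, f j ((T j ^ a j n) x)
          - ∏ j, (μ[f j | invariantAlgebra m ⇑(T j)]) x) 2 μ) atTop (𝓝 0)

/-!
Apply the invariant-factor control to `f₁ = ⋯ = f_ℓ = 1_E` and integrate the resulting
`L²`-limit over `E`: the averages of `μ(E ∩ T₁^{-a₁(n)}E ∩ ⋯ ∩ T_ℓ^{-a_ℓ(n)}E)` converge to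
`∫_E ∏ⱼ Gⱼ`, where `Gⱼ = 𝔼(1_E | I(Tⱼ))`. This is at least `μ(E)^{ℓ+1}` (Chu's inequality): the
`ℓ + 1` functions `∏ⱼ Gⱼ` and `Gⱼ⁻¹` multiply to `1` on `E`, so Hölder's inequality gives
`μ(E)^{ℓ+1} ≤ ∫_E ∏ⱼ Gⱼ · ∏ⱼ ∫_E Gⱼ⁻¹`, and `∫_E Gⱼ⁻¹ = ∫ Gⱼ Gⱼ⁻¹ ≤ 1` because `Gⱼ⁻¹` is
`I(Tⱼ)`-measurable. Finally, a bounded sequence whose Cesàro averages converge to `L` is at least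
`t` on a set of positive upper density for every `t < L`.
-/

theorem invariantAlgebra_le {X : Type*} (m : MeasurableSpace X) (T : X → X) :
    invariantAlgebra m T ≤ m := fun _ hs => hs.1

section UpperDensity

open Finset

theorem natCard_subtype_mem_Icc (B : Set ℕ) [DecidablePred (· ∈ B)] (N : ℕ) :
    Nat.card {n : ℕ // n ∈ B ∧ 1 ≤ n ∧ n ≤ N} = #{n ∈ Icc 1 N | n ∈ B} := by
  rw [← Nat.card_eq_finsetCard]
  exact Nat.card_congr (Equiv.subtypeEquivRight fun n => by simp only [mem_filter, mem_Icc]; tauto)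

theorem le_upperDensityNat {B : Set ℕ} [DecidablePred (· ∈ B)] {δ : ℝ}
    (h : ∃ᶠ N in atTop, δ * N ≤ #{n ∈ Icc 1 N | n ∈ B}) : δ ≤ upperDensityNat B := by
  refine le_limsup_of_frequently_le ?_ (isBoundedUnder_of ⟨1, fun N => ?_⟩)
  · refine (h.and_eventually (eventually_gt_atTop 0)).mono fun N ⟨hN, hN0⟩ => ?_
    rw [natCard_subtype_mem_Icc, le_div_iff₀ (by exact_mod_cast hN0)]
    exact hN
  · rw [natCard_subtype_mem_Icc]
    refine div_le_one_of_le₀ ?_ N.cast_nonneg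
    exact_mod_cast (card_filter_le _ _).trans (Nat.card_Icc 1 N).le

theorem upperDensityNat_pos_of_tendsto_average {v : ℕ → ℝ} {M L t : ℝ} (hv : ∀ n, v n ≤ M)
    (hlim : Tendsto (fun N : ℕ => (N : ℝ)⁻¹ * ∑ n ∈ Icc 1 N, v n) atTop (𝓝 L)) (ht : t < L) :
    0 < upperDensityNat {n | t ≤ v n} := by
  classical
  set B : Set ℕ := {n | t ≤ v n}
  set M' := max M (t + 1)
  have hM' : 0 < M' - t := by linarith [le_max_right M (t + 1)]
  have hsum : ∀ N, ∑ n ∈ Icc 1 N, v n ≤ N * t + (M' - t) * #{n ∈ Icc 1 N | n ∈ B} := by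
    intro N
    calc ∑ n ∈ Icc 1 N, v n
        ≤ ∑ n ∈ Icc 1 N, (t + (M' - t) * if n ∈ B then 1 else 0) := by
          refine sum_le_sum fun n _ => ?_
          split_ifs with h
          · linarith [hv n, le_max_left M (t + 1)]
          · linarith [not_le.mp (show ¬t ≤ v n from h)]
      _ = N * t + (M' - t) * #{n ∈ Icc 1 N | n ∈ B} := by
          rw [sum_add_distrib, ← mul_sum, sum_boole, sum_const, Nat.card_Icc, nsmul_eq_mul]
          simp
  refine lt_of_lt_of_le ?_ (le_upperDensityNat (δ := (L - t) / 2 / (M' - t)) ?_)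
  · exact div_pos (by linarith) hM'
  refine Eventually.frequently ?_
  filter_upwards [hlim.eventually (eventually_gt_nhds (by linarith : (t + L) / 2 < L)),
    eventually_gt_atTop 0] with N hN hN0
  have hNpos : (0 : ℝ) < N := by exact_mod_cast hN0
  rw [lt_inv_mul_iff₀ hNpos] at hN
  rw [div_mul_eq_mul_div, div_le_iff₀ hM']
  nlinarith [hsum N]

end UpperDensity

namespace MeasureTheory

section CondLExp

variable {Ω : Type*} {m m₀ : MeasurableSpace Ω} {μ : Measure[m₀] Ω}

theorem lintegral_condLExp_mul (hm : m ≤ m₀) [SigmaFinite (μ.trim hm)] {X H : Ω → ℝ≥0∞}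
    (hX : AEMeasurable X μ) (hH : Measurable[m] H) :
    ∫⁻ ω, μ⁻[X|m] ω * H ω ∂μ = ∫⁻ ω, X ω * H ω ∂μ := by
  have htrim : (μ.withDensity μ⁻[X|m]).trim hm = (μ.withDensity X).trim hm := by
    refine @Measure.ext _ m _ _ fun s hs => ?_
    rw [trim_measurableSet_eq hm hs, trim_measurableSet_eq hm hs, withDensity_apply _ (hm s hs),
      withDensity_apply _ (hm s hs), setLIntegral_condLExp hm μ X hs]
  calc ∫⁻ ω, μ⁻[X|m] ω * H ω ∂μ = ∫⁻ ω, H ω ∂(μ.withDensity μ⁻[X|m]).trim hm := by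
        rw [lintegral_trim hm hH,
          lintegral_withDensity_eq_lintegral_mul _ (measurable_condLExp' m μ X) (hH.mono hm le_rfl)]
        rfl
    _ = ∫⁻ ω, X ω * H ω ∂μ := by
        rw [htrim, lintegral_trim hm hH,
          lintegral_withDensity_eq_lintegral_mul₀ hX (hH.mono hm le_rfl).aemeasurable]
        rfl

theorem ae_condLExp_ne_zero (hm : m ≤ m₀) [SigmaFinite (μ.trim hm)] {X : Ω → ℝ≥0∞}
    (hX : AEMeasurable X μ) : ∀ᵐ ω ∂μ, X ω ≠ 0 → μ⁻[X|m] ω ≠ 0 := by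
  have hs : MeasurableSet[m] {ω | μ⁻[X|m] ω = 0} :=
    measurable_condLExp m μ X (measurableSet_singleton 0)
  have hzero : ∫⁻ ω in {ω | μ⁻[X|m] ω = 0}, X ω ∂μ = 0 := by
    rw [← setLIntegral_condLExp hm μ X hs]
    exact setLIntegral_eq_zero_iff (hm _ hs) (measurable_condLExp' m μ X) |>.mpr
      (ae_of_all _ fun _ h => h)
  filter_upwards [(setLIntegral_eq_zero_iff' (hm _ hs) hX.restrict).mp hzero] with ω h hX0 hG0
  exact hX0 (h hG0)

theorem lintegral_mul_inv_condLExp_le (hm : m ≤ m₀) [SigmaFinite (μ.trim hm)] {X : Ω → ℝ≥0∞}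
    (hX : AEMeasurable X μ) : ∫⁻ ω, X ω * (μ⁻[X|m] ω)⁻¹ ∂μ ≤ μ Set.univ := by
  rw [← lintegral_condLExp_mul (H := fun ω => (μ⁻[X|m] ω)⁻¹) hm hX
    (measurable_condLExp m μ X).inv, ← lintegral_one]
  -- `G * G⁻¹ ≤ 1` holds also where `G = 0`, since `0 * ∞ = 0` in `ℝ≥0∞`
  exact lintegral_mono fun ω => ENNReal.mul_inv_le_one _

end CondLExp

variable {Ω : Type*} [m₀ : MeasurableSpace Ω] {μ : Measure Ω}

theorem measure_univ_pow_card_le_prod_lintegral {ι : Type*} [Fintype ι] {W : ι → Ω → ℝ≥0∞}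
    (hW : ∀ i, AEMeasurable (W i) μ) (hprod : ∀ᵐ ω ∂μ, ∏ i, W i ω = 1) :
    μ Set.univ ^ Fintype.card ι ≤ ∏ i, ∫⁻ ω, W i ω ∂μ := by
  rcases isEmpty_or_nonempty ι with hι | hι
  · simp
  set p : ℝ := (Fintype.card ι : ℝ)⁻¹
  have hp : 0 < p := by positivity
  have hsum : ∑ _i : ι, p = 1 := by simp [p, Finset.card_univ]
  have key : μ Set.univ ≤ (∏ i, ∫⁻ ω, W i ω ∂μ) ^ p :=
    calc μ Set.univ = ∫⁻ ω, ∏ i, W i ω ^ p ∂μ := by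
          rw [← lintegral_one]
          refine lintegral_congr_ae ?_
          filter_upwards [hprod] with ω h
          rw [ENNReal.prod_rpow_of_nonneg hp.le, h, ENNReal.one_rpow]
      _ ≤ ∏ i, (∫⁻ ω, W i ω ∂μ) ^ p :=
          ENNReal.lintegral_prod_norm_pow_le _ (fun i _ => hW i) hsum fun _ _ => hp.le
      _ = (∏ i, ∫⁻ ω, W i ω ∂μ) ^ p := ENNReal.prod_rpow_of_nonneg hp.le
  calc μ Set.univ ^ Fintype.card ι ≤ ((∏ i, ∫⁻ ω, W i ω ∂μ) ^ p) ^ Fintype.card ι :=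
        pow_le_pow_left' key _
    _ = ∏ i, ∫⁻ ω, W i ω ∂μ := by
        rw [← ENNReal.rpow_natCast, ← ENNReal.rpow_mul, inv_mul_cancel₀ (by positivity),
          ENNReal.rpow_one]

theorem measure_pow_succ_le_setLIntegral_prod_condLExp [IsProbabilityMeasure μ] {l : ℕ}
    {m : Fin l → MeasurableSpace Ω} (hm : ∀ j, m j ≤ m₀) {E : Set Ω} (hE : MeasurableSet E) :
    μ E ^ (l + 1) ≤ ∫⁻ ω in E, ∏ j, μ⁻[E.indicator 1|m j] ω ∂μ := by
  set G : Fin l → Ω → ℝ≥0∞ := fun j => μ⁻[E.indicator 1|m j]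
  have hE1 : AEMeasurable (E.indicator (1 : Ω → ℝ≥0∞)) μ :=
    (measurable_one.indicator hE).aemeasurable
  have hG : ∀ j, Measurable (G j) := fun j => measurable_condLExp' _ μ _
  have hG_ne_zero : ∀ j, ∀ᵐ ω ∂μ.restrict E, G j ω ≠ 0 := fun j => by
    filter_upwards [ae_restrict_of_ae (ae_condLExp_ne_zero (hm j) hE1), ae_restrict_mem hE]
      with ω h hω
    exact h (by simp [hω])
  have hG_ne_top : ∀ j, ∀ᵐ ω ∂μ.restrict E, G j ω ≠ ∞ := fun j =>
    ae_restrict_of_ae (condLExp_ne_top (by simp [lintegral_indicator hE]))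
  have hG_inv : ∀ j, ∫⁻ ω in E, (G j ω)⁻¹ ∂μ ≤ 1 := fun j =>
    calc ∫⁻ ω in E, (G j ω)⁻¹ ∂μ = ∫⁻ ω, E.indicator 1 ω * (G j ω)⁻¹ ∂μ := by
          rw [← lintegral_indicator hE]
          congr 1 with ω
          by_cases hω : ω ∈ E <;> simp [hω]
      _ ≤ 1 := (lintegral_mul_inv_condLExp_le (hm j) hE1).trans_eq measure_univ
  set W : Fin (l + 1) → Ω → ℝ≥0∞ := Fin.cons (fun ω => ∏ j, G j ω) fun j ω => (G j ω)⁻¹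
  have hW : ∀ i, AEMeasurable (W i) (μ.restrict E) := Fin.cases
    (Finset.measurable_prod Finset.univ fun j _ => hG j).aemeasurable
    fun j => (hG j).inv.aemeasurable
  have hW_prod : ∀ᵐ ω ∂μ.restrict E, ∏ i, W i ω = 1 := by
    filter_upwards [ae_all_iff.mpr hG_ne_zero, ae_all_iff.mpr hG_ne_top] with ω h0 htop
    simp only [W, Fin.prod_univ_succ, Fin.cons_zero, Fin.cons_succ, ← Finset.prod_mul_distrib]
    exact Finset.prod_eq_one fun j _ => ENNReal.mul_inv_cancel (h0 j) (htop j)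
  calc μ E ^ (l + 1) ≤ ∏ i, ∫⁻ ω in E, W i ω ∂μ := by
        simpa using measure_univ_pow_card_le_prod_lintegral hW hW_prod
    _ = (∫⁻ ω in E, ∏ j, G j ω ∂μ) * ∏ j, ∫⁻ ω in E, (G j ω)⁻¹ ∂μ := by
        simp [W, Fin.prod_univ_succ]
    _ ≤ ∫⁻ ω in E, ∏ j, G j ω ∂μ :=
        mul_le_of_le_one_right' (Finset.prod_le_one' fun j _ => hG_inv j)

theorem measureReal_pow_succ_le_setIntegral_prod_condExp [IsProbabilityMeasure μ] {l : ℕ}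
    {m : Fin l → MeasurableSpace Ω} (hm : ∀ j, m j ≤ m₀) {E : Set Ω} (hE : MeasurableSet E) :
    μ.real E ^ (l + 1) ≤ ∫ ω in E, ∏ j, μ[E.indicator (1 : Ω → ℝ)|m j] ω ∂μ := by
  set g : Fin l → Ω → ℝ := fun j => μ[E.indicator 1|m j]
  have hE1 : ∀ ω, 0 ≤ E.indicator (1 : Ω → ℝ) ω := Set.indicator_nonneg fun _ _ => zero_le_one
  have hg_nonneg : ∀ j, 0 ≤ᵐ[μ] g j := fun j => condExp_nonneg (ae_of_all _ hE1)
  have hg_le : ∀ j, ∀ᵐ ω ∂μ, |g j ω| ≤ 1 := fun j =>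
    ae_bdd_abs_condExp_of_ae_bdd_abs (ae_of_all _ fun ω => by
      by_cases hω : ω ∈ E <;> simp [hω])
  have hg : ∀ j, μ⁻[E.indicator 1|m j] =ᵐ[μ] fun ω => ENNReal.ofReal (g j ω) := fun j => by
    have h := condLExp_ofReal (m j) ((integrable_const (1 : ℝ) (μ := μ)).indicator hE)
      (ae_of_all _ hE1)
    convert h using 3 with ω
    · by_cases hω : ω ∈ E <;> simp [hω]
    · rfl
  have hint : Integrable (fun ω => ∏ j, g j ω) μ := by
    refine .of_bound (Finset.aestronglyMeasurable_fun_prod Finset.univ fun j _ =>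
      integrable_condExp.aestronglyMeasurable) 1 ?_
    filter_upwards [ae_all_iff.mpr hg_le] with ω h
    simpa [Finset.abs_prod] using Finset.prod_le_one (fun j _ => abs_nonneg _) fun j _ => h j
  have hprod_nonneg : ∀ᵐ ω ∂μ, 0 ≤ ∏ j, g j ω := by
    filter_upwards [ae_all_iff.mpr hg_nonneg] with ω h
    exact Finset.prod_nonneg fun j _ => h j
  rw [measureReal_def, ← ENNReal.toReal_pow]
  refine ENNReal.toReal_le_of_le_ofReal (setIntegral_nonneg_of_ae_restrict
    (ae_restrict_of_ae hprod_nonneg)) ?_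
  rw [ofReal_integral_eq_lintegral_ofReal hint.integrableOn (ae_restrict_of_ae hprod_nonneg)]
  refine (measure_pow_succ_le_setLIntegral_prod_condLExp hm hE).trans_eq ?_
  refine lintegral_congr_ae (ae_restrict_of_ae ?_)
  filter_upwards [ae_all_iff.mpr hg, ae_all_iff.mpr hg_nonneg] with ω h h0
  rw [ENNReal.ofReal_prod_of_nonneg fun j _ => h0 j]
  exact Finset.prod_congr rfl fun j _ => h j

theorem tendsto_setIntegral_of_tendsto_eLpNorm [IsProbabilityMeasure μ] {ι : Type*}
    {l : Filter ι} {F : ι → Ω → ℝ} {f : Ω → ℝ} {p : ℝ≥0∞} (hp : 1 ≤ p)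
    (hF : ∀ᶠ i in l, Integrable (F i) μ) (hf : AEStronglyMeasurable f μ)
    (h : Tendsto (fun i => eLpNorm (F i - f) p μ) l (𝓝 0)) (s : Set Ω) :
    Tendsto (fun i => ∫ x in s, F i x ∂μ) l (𝓝 (∫ x in s, f x ∂μ)) := by
  refine tendsto_setIntegral_of_L1' f hf hF ?_ s
  refine tendsto_of_tendsto_of_tendsto_of_le_of_le' tendsto_const_nhds h
    (Eventually.of_forall fun _ => zero_le) ?_
  filter_upwards [hF] with i hi
  exact eLpNorm_le_eLpNorm_of_exponent_le hp (hi.1.sub hf)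

theorem tendsto_average_measureReal_inter_preimage [IsProbabilityMeasure μ] {ι : Type*}
    [Fintype ι] {S : ℕ → ι → Ω → Ω} (hS : ∀ n i, Measurable (S n i)) {E : Set Ω}
    (hE : MeasurableSet E) {g : Ω → ℝ} (hg : AEStronglyMeasurable g μ)
    (h : Tendsto (fun N : ℕ => eLpNorm (fun x =>
      (N : ℝ)⁻¹ * ∑ n ∈ Finset.Icc 1 N, ∏ i, E.indicator 1 (S n i x) - g x) 2 μ) atTop (𝓝 0)) :
    Tendsto (fun N : ℕ => (N : ℝ)⁻¹ * ∑ n ∈ Finset.Icc 1 N, μ.real (E ∩ ⋂ i, S n i ⁻¹' E))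
      atTop (𝓝 (∫ x in E, g x ∂μ)) := by
  have hprod : ∀ n, (fun x => ∏ i, E.indicator (1 : Ω → ℝ) (S n i x)) =
      (⋂ i, S n i ⁻¹' E).indicator 1 := fun n => by
    ext x
    have := prod_indicator_apply Finset.univ (fun i => S n i ⁻¹' E) (fun _ => (1 : Ω → ℝ)) x
    simp only [Finset.mem_univ, Set.iInter_true, Finset.prod_const_one] at this
    rw [← this]
    exact Finset.prod_congr rfl fun i _ => by by_cases hx : S n i x ∈ E <;> simp [hx]
  have hmeas : ∀ n, MeasurableSet (⋂ i, S n i ⁻¹' E) := fun n => .iInter fun i => hS n i hE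
  have hint : ∀ n, Integrable (fun x => ∏ i, E.indicator (1 : Ω → ℝ) (S n i x)) μ := fun n => by
    rw [hprod n]
    exact (integrable_const 1).indicator (hmeas n)
  refine (tendsto_setIntegral_of_tendsto_eLpNorm one_le_two
    (Eventually.of_forall fun N => (integrable_finsetSum _ fun n _ => hint n).const_mul _)
    hg h E).congr fun N => ?_
  rw [integral_const_mul, integral_finsetSum _ fun n _ => (hint n).integrableOn]
  refine congrArg _ (Finset.sum_congr rfl fun n _ => ?_)
  rw [hprod n, setIntegral_indicator (hmeas n)]
  simp

end MeasureTheory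

universe u

/-- **Lower bounds for multiple recurrence.** If the sequences `a 1, …, a ℓ` are controlled by
the invariant factor for every system, then for every system and every measurable set `E`,
the averages of `μ(E ∩ T₁^{-a₁(n)}E ∩ ⋯ ∩ T_ℓ^{-a_ℓ(n)}E)` converge to a limit `≥ μ(E)^{ℓ+1}`,
and for every `ε > 0` the set of `n` with
`μ(E ∩ T₁^{-a₁(n)}E ∩ ⋯ ∩ T_ℓ^{-a_ℓ(n)}E) ≥ μ(E)^{ℓ+1} - ε` has positive upper density. -/
theorem recurrence_lower_bounds_of_invariant_control {ℓ : ℕ} (a : Fin ℓ → ℕ → ℤ)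
    (hcontrol : ∀ (X : Type u) (mX : MeasurableSpace X) (μ : Measure X),
      IsProbabilityMeasure μ → ∀ T : Fin ℓ → X ≃ᵐ X,
        (∀ j, MeasurePreserving (⇑(T j)) μ μ) → (∀ i j, Commute (T i) (T j)) →
          InvariantFactorControlled μ T a)
    (X : Type u) (mX : MeasurableSpace X) (μ : Measure X) (hprob : IsProbabilityMeasure μ)
    (T : Fin ℓ → X ≃ᵐ X) (hmp : ∀ j, MeasurePreserving (⇑(T j)) μ μ)
    (hcomm : ∀ i j, Commute (T i) (T j))
    (E : Set X) (hE : MeasurableSet E) :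
    (∃ L : ℝ, Tendsto (fun N : ℕ =>
        (N : ℝ)⁻¹ * ∑ n ∈ Finset.Icc 1 N,
          (μ (E ∩ ⋂ j, (⇑(T j ^ a j n)) ⁻¹' E)).toReal) atTop (𝓝 L) ∧
        (μ E).toReal ^ (ℓ + 1) ≤ L) ∧
    (∀ ε : ℝ, 0 < ε →
      0 < upperDensityNat {n : ℕ |
        (μ E).toReal ^ (ℓ + 1) - ε ≤ (μ (E ∩ ⋂ j, (⇑(T j ^ a j n)) ⁻¹' E)).toReal}) := by
  set f : X → ℝ := E.indicator 1
  set L := ∫ x in E, ∏ j, μ[f|invariantAlgebra mX ⇑(T j)] x ∂μ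
  have hf_bdd : ∀ x, |f x| ≤ 1 := fun x => by by_cases hx : x ∈ E <;> simp [f, hx]
  have hL2 := hcontrol X mX μ hprob T hmp hcomm (fun _ => f)
    (fun _ => measurable_one.indicator hE) fun _ => ⟨1, hf_bdd⟩
  have hlim : Tendsto (fun N : ℕ => (N : ℝ)⁻¹ * ∑ n ∈ Finset.Icc 1 N,
      (μ (E ∩ ⋂ j, (⇑(T j ^ a j n)) ⁻¹' E)).toReal) atTop (𝓝 L) :=
    tendsto_average_measureReal_inter_preimage (fun n j => (T j ^ a j n).measurable) hE
      (Finset.aestronglyMeasurable_fun_prod _ fun j _ => integrable_condExp.aestronglyMeasurable)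
      hL2
  have hL : (μ E).toReal ^ (ℓ + 1) ≤ L :=
    measureReal_pow_succ_le_setIntegral_prod_condExp (fun j => invariantAlgebra_le mX ⇑(T j)) hE
  exact ⟨⟨L, hlim, hL⟩, fun ε hε =>
    upperDensityNat_pos_of_tendsto_average (fun n => measureReal_le_one) hlim (by linarith)⟩
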